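/- There exists a graded morphism of Hopf algebras ψ: (ℋ,·,Δ) → (T(ℬ),⧢,Δ̄), i.e. a linear map with ψ(ℋ_{(m)}) ⊆ T(ℬ)_{(m)} for all m ≥ 0, ψ(h₁h₂) = ψ(h₁)⧢ψ(h₂) for all h₁,h₂ ∈ ℋ, and Δ̄ψ(h) = (ψ⊗ψ)Δh for all h ∈ ℋ, such that for every n ≥ 1 and every tree τ with |τ| ≤ n one has ψ(τ) = τ + ψ_{n−1}(τ), where ψ_{n−1} denotes the composition of ψ with the projection onto T(ℬ_{n−1}). -/

import Mathlib

open scoped TensorProduct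
open scoped Classical

noncomputable section

/-! ### Labelled rooted trees with unordered branches

`TreeData A` axiomatizes the set `𝒯` of nonempty rooted trees with finitely many
vertices, each vertex labelled from the alphabet `A`, with unordered branches:
`attach m a = [τ₁ ⋯ τₘ]_a` attaches the forest (multiset of trees) `m` to a new
root labelled `a`, and every tree arises uniquely in this way; `size τ = |τ|` is
the number of vertices.  These conditions pin the structure down uniquely. -/
structure TreeData (A : Type) : Type 1 where
  T : Type
  size : T → ℕ
  size_pos : ∀ τ, 0 < size τ
  attach : (T →₀ ℕ) → A → T
  attach_bijective : Function.Bijective fun p : (T →₀ ℕ) × A => attach p.1 p.2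
  size_attach : ∀ m a, size (attach m a) = 1 + m.sum fun τ k => k * size τ

namespace TreeData

variable {A : Type} (TD : TreeData A)

/-- the single-vertex tree `•_a` -/
def leaf (a : A) : TD.T := TD.attach 0 a

/-- The Connes–Kreimer Hopf algebra `ℋ`: the free commutative polynomial
`ℝ`-algebra on the trees, with linear basis the forests (monomials). -/
abbrev H : Type := MvPolynomial TD.T ℝ

/-- the grade `|τ₁ ⋯ τₙ| = |τ₁| + ⋯ + |τₙ|` of a forest -/
def grade (m : TD.T →₀ ℕ) : ℕ := m.sum fun τ k => k * TD.size τ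

/-- the basis monomial of `ℋ` corresponding to a forest -/
def mono (m : TD.T →₀ ℕ) : TD.H := MvPolynomial.monomial m (1 : ℝ)

/-- the grafting operator `B₊_a`, sending a forest `τ₁ ⋯ τₘ` to `[τ₁ ⋯ τₘ]_a` -/
def Bplus (a : A) : TD.H →ₗ[ℝ] TD.H :=
  (MvPolynomial.basisMonomials TD.T ℝ).constr ℝ fun m =>
    TD.mono (Finsupp.single (TD.attach m a) 1)

/-- `ℋ*`, the full linear dual of `ℋ`: formal series in the dual basis of forests -/
abbrev Dual : Type := (TD.T →₀ ℕ) → ℝ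

/-- the pairing `⟨f, h⟩` of `f ∈ ℋ*` with `h ∈ ℋ` -/
def pairL (f : TD.Dual) : TD.H →ₗ[ℝ] ℝ :=
  (MvPolynomial.basisMonomials TD.T ℝ).constr ℝ f

/-- the dual basis element of `ℋ*` corresponding to a forest -/
def dualForest (m : TD.T →₀ ℕ) : TD.Dual := fun m' => if m' = m then 1 else 0

/-- the counit `1* ∈ ℋ*` -/
def unitD : TD.Dual := fun m => if m = 0 then 1 else 0

/-- the subspace `ℋ_n ⊆ ℋ` spanned by the forests of grade at most `n` -/
def Hn (n : ℕ) : Submodule ℝ TD.H :=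
  Submodule.span ℝ {p : TD.H | ∃ m : TD.T →₀ ℕ, TD.grade m ≤ n ∧ p = TD.mono m}

/-- `g` is a character of `ℋ_N` (an element of the truncated group `G_N(ℋ)`):
`⟨g,1⟩ = 1` and `⟨g, h₁h₂⟩ = ⟨g,h₁⟩⟨g,h₂⟩` whenever `|h₁| + |h₂| ≤ N`. -/
def IsCharN (N : ℕ) (g : TD.Dual) : Prop :=
  g 0 = 1 ∧ (∀ m, ¬TD.grade m ≤ N → g m = 0) ∧
    ∀ m₁ m₂, TD.grade m₁ + TD.grade m₂ ≤ N → g (m₁ + m₂) = g m₁ * g m₂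

/-- `h ∈ ℋ*` is a `δ`-primitive: `δh = 1 ⊗ h + h ⊗ 1`, i.e.
`⟨h, xy⟩ = ⟨1, x⟩⟨h, y⟩ + ⟨h, x⟩⟨1, y⟩` for all `x, y ∈ ℋ`. -/
def IsPrim (f : TD.Dual) : Prop :=
  ∀ p q : TD.H, TD.pairL f (p * q) =
    TD.pairL TD.unitD p * TD.pairL f q + TD.pairL f p * TD.pairL TD.unitD q

/-- `g ∈ ℋ*` is group-like: `δg = g ⊗ g`, i.e. `⟨g, xy⟩ = ⟨g, x⟩⟨g, y⟩`. -/
def IsGroupLike (g : TD.Dual) : Prop :=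
  ∀ p q : TD.H, TD.pairL g (p * q) = TD.pairL g p * TD.pairL g q

/-- the linear tree with root labelled `a` and the labels of `l` going up the chain -/
def chainUp : A → List A → TD.T
  | a, [] => TD.leaf a
  | a, b :: l => TD.attach (Finsupp.single (chainUp b l) 1) a

/-- the inclusion `ι : T(ℝᵈ) → ℋ` on basis words: the word `i₁ ⋯ i_k` is sent to the
(forest consisting of the) linear tree with `i₁` at the top down to `i_k` at the root -/
def iotaForest (w : List A) : TD.T →₀ ℕ :=
  match w.reverse with
  | [] => 0
  | a :: l => Finsupp.single (TD.chainUp a l) 1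

/-- `F` is the family of elementary differentials (Butcher coefficients) `f_τ`
associated to the vector fields `f_a`: `f_{[τ₁⋯τₙ]_a} = Dⁿf_a : (f_{τ₁},…,f_{τₙ})`. -/
def IsElemDiff (e : ℕ) (f : A → (Fin e → ℝ) → Fin e → ℝ)
    (F : TD.T → (Fin e → ℝ) → Fin e → ℝ) : Prop :=
  ∀ (m : TD.T →₀ ℕ) (a : A) (y : Fin e → ℝ) (α : Fin e),
    F (TD.attach m a) y α =
      iteratedFDeriv ℝ m.toMultiset.toList.length (fun x => f a x α) y
        (fun j => F (m.toMultiset.toList.get j) y)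

/-- `f_h` on the forest basis: `f_1 = Id`, `f_τ = F τ` on trees, and `f` vanishes on
nontrivial forest products. -/
def forestElem {e : ℕ} (F : TD.T → (Fin e → ℝ) → Fin e → ℝ)
    (m : TD.T →₀ ℕ) (y : Fin e → ℝ) (α : Fin e) : ℝ :=
  if m = 0 then y α
  else if h : ∃ τ : TD.T, m = Finsupp.single τ 1 then F h.choose y α else 0

end TreeData

/-- The Connes–Kreimer coproduct: the algebra morphism `Δ : ℋ → ℋ ⊗ ℋ` determined
recursively by `Δ1 = 1 ⊗ 1` and
`Δ[τ₁⋯τₘ]_a = [τ₁⋯τₘ]_a ⊗ 1 + Σ (τ₁⁽¹⁾⋯τₘ⁽¹⁾) ⊗ [τ₁⁽²⁾⋯τₘ⁽²⁾]_a`,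
i.e. by the cocycle property `Δ ∘ B₊_a = B₊_a ⊗ 1 + (id ⊗ B₊_a) ∘ Δ`. -/
structure CKCoproduct {A : Type} (TD : TreeData A) where
  Δ : TD.H →ₐ[ℝ] TD.H ⊗[ℝ] TD.H
  Δ_Bplus : ∀ (a : A) (p : TD.H),
    Δ (TD.Bplus a p) = TD.Bplus a p ⊗ₜ[ℝ] 1 + LinearMap.lTensor TD.H (TD.Bplus a) (Δ p)

namespace CKCoproduct

variable {A : Type} {TD : TreeData A} (CK : CKCoproduct TD)

/-- the convolution product on `ℋ*`: `⟨f ⋆ g, h⟩ = ⟨f ⊗ g, Δh⟩` -/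
def conv (f g : TD.Dual) : TD.Dual := fun m =>
  LinearMap.mul' ℝ ℝ (TensorProduct.map (TD.pairL f) (TD.pairL g) (CK.Δ (TD.mono m)))

/-- the convolution product, truncated beyond grade `N` -/
def convN (N : ℕ) (f g : TD.Dual) : TD.Dual := fun m =>
  if TD.grade m ≤ N then CK.conv f g m else 0

/-- truncated convolution powers -/
def convNPow (N : ℕ) (f : TD.Dual) (k : ℕ) : TD.Dual :=
  Nat.rec TD.unitD (fun _ ih => CK.convN N f ih) k

/-- the `⋆`-inverse in the truncated character group `G_N(ℋ)` -/
def starInv (N : ℕ) (g : TD.Dual) : TD.Dual := fun m =>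
  ∑ k ∈ Finset.range (N + 1), (-1 : ℝ) ^ k * CK.convNPow N (g - TD.unitD) k m

/-- the truncated `⋆`-logarithm `log⋆(1+x) = Σ_{k≥1} (−1)^{k−1} x^{⋆k}/k` -/
def logStar (N : ℕ) (g : TD.Dual) : TD.Dual := fun m =>
  ∑ k ∈ Finset.Icc 1 N, ((-1 : ℝ) ^ (k + 1) / k) * CK.convNPow N (g - TD.unitD) k m

/-- untruncated convolution powers -/
def convPow (f : TD.Dual) (k : ℕ) : TD.Dual :=
  Nat.rec TD.unitD (fun _ ih => CK.conv f ih) k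

/-- the `⋆`-exponential `exp⋆(h) = Σ_{k≥0} h^{⋆k}/k!` -/
def expStar (f : TD.Dual) : TD.Dual := fun m => ∑' k : ℕ, (Nat.factorial k : ℝ)⁻¹ * CK.convPow f k m

/-- the increments `𝐗_{st} = 𝐗_s⁻¹ ⋆ 𝐗_t` of a path in `G_N(ℋ)` -/
def inc (N : ℕ) (X : ℝ → TD.Dual) (s t : ℝ) : TD.Dual :=
  CK.convN N (CK.starInv N (X s)) (X t)

/-- a `γ`-Hölder branched rough path on `[0,T]`: a path in `G_N(ℋ)` with
`sup_{s≠t} |⟨𝐗_{st},τ⟩|/|t−s|^{γ|τ|} < ∞` for every forest `τ` of grade `≤ N`. -/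
def IsBRP (γ : ℝ) (N : ℕ) (Tf : ℝ) (X : ℝ → TD.Dual) : Prop :=
  (∀ t ∈ Set.Icc (0 : ℝ) Tf, TD.IsCharN N (X t)) ∧
    ∀ m : TD.T →₀ ℕ, TD.grade m ≤ N →
      ∃ C : ℝ, ∀ s ∈ Set.Icc (0 : ℝ) Tf, ∀ t ∈ Set.Icc (0 : ℝ) Tf,
        |CK.inc N X s t m| ≤ C * |t - s| ^ (γ * (TD.grade m : ℝ))

end CKCoproduct

/-! ### Words: the tensor algebra over a set of letters, with shuffle and
(de)concatenation structure.  An element of `T(V)` (or a functional on it) is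
represented by its family of coefficients on basis words. -/
namespace Words

variable {ι : Type}

/-- the empty word `1` (as a dual/coefficient family) -/
def unitW : List ι → ℝ := fun w => if w = [] then 1 else 0

/-- the basis element corresponding to a single word -/
def deltaW (w : List ι) : List ι → ℝ := fun w' => if w' = w then 1 else 0

/-- the multiset of shuffles (interleavings) of two words -/
def Shuf : List ι → List ι → Multiset (List ι)
  | [], l => {l}
  | a :: as, [] => {a :: as}
  | a :: as, b :: bs =>
      ((Shuf as (b :: bs)).map fun w => a :: w) + ((Shuf (a :: as) bs).map fun w => b :: w)
  termination_by l₁ l₂ => l₁.length + l₂.length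

/-- the subword of `w` along a set of positions -/
def subIdx (w : List ι) (S : Finset (Fin w.length)) : List ι :=
  (S.sort (· ≤ ·)).map w.get

/-- the shuffle product `⧢` (in coefficients) -/
def shufW (x y : List ι → ℝ) : List ι → ℝ := fun w =>
  ∑ S : Finset (Fin w.length), x (subIdx w S) * y (subIdx w Sᶜ)

/-- the concatenation (tensor) product of functionals, truncated beyond `N` letters -/
def concatConvN (N : ℕ) (f g : List ι → ℝ) : List ι → ℝ := fun w =>
  if w.length ≤ N then ∑ k ∈ Finset.range (w.length + 1), f (w.take k) * g (w.drop k) else 0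

/-- truncated concatenation powers -/
def concatPow (N : ℕ) (f : List ι → ℝ) (k : ℕ) : List ι → ℝ :=
  Nat.rec unitW (fun _ ih => concatConvN N f ih) k

/-- the inverse in the truncated group: `g⁻¹ = Σ_k (−1)^k (g − 1)^{⊗k}` -/
def concatInv (N : ℕ) (g : List ι → ℝ) : List ι → ℝ := fun w =>
  ∑ k ∈ Finset.range (N + 1), (-1 : ℝ) ^ k * concatPow N (g - unitW) k w

/-- the truncated tensor exponential -/
def expW (N : ℕ) (x : List ι → ℝ) : List ι → ℝ := fun w =>
  ∑ k ∈ Finset.range (N + 1), (Nat.factorial k : ℝ)⁻¹ * concatPow N x k w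

/-- the truncated tensor logarithm -/
def logW (N : ℕ) (x : List ι → ℝ) : List ι → ℝ := fun w =>
  ∑ k ∈ Finset.Icc 1 N, ((-1 : ℝ) ^ (k + 1) / k) * concatPow N (x - unitW) k w

/-- a shuffle character truncated at `N` letters, with letters restricted by `P`:
an element of the step-`N` free nilpotent group `G^{(N)}` over the letters. -/
def IsShuffleCharN (N : ℕ) (P : ι → Prop) (g : List ι → ℝ) : Prop :=
  g [] = 1 ∧ (∀ w : List ι, ¬(w.length ≤ N ∧ ∀ σ ∈ w, P σ) → g w = 0) ∧
    ∀ u v : List ι, u.length + v.length ≤ N → ((Shuf u v).map g).sum = g u * g v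

/-- the increments `𝐗̄_{st} = 𝐗̄_s⁻¹ ⊗ 𝐗̄_t` of a path in `G^{(N)}` -/
def gInc (N : ℕ) (X : ℝ → List ι → ℝ) (s t : ℝ) : List ι → ℝ :=
  concatConvN N (concatInv N (X s)) (X t)

/-- a `γ`-Hölder geometric rough path on `[0,T]`: a path in the step-`N` free
nilpotent group with `|⟨𝐗̄_{st}, w⟩| ≤ C|t−s|^{γk}` for words of `k ≤ N` letters. -/
def IsGeomRP (γ : ℝ) (N : ℕ) (Tf : ℝ) (P : ι → Prop) (X : ℝ → List ι → ℝ) : Prop :=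
  (∀ t ∈ Set.Icc (0 : ℝ) Tf, IsShuffleCharN N P (X t)) ∧
    ∀ w : List ι, w.length ≤ N →
      ∃ C : ℝ, ∀ s ∈ Set.Icc (0 : ℝ) Tf, ∀ t ∈ Set.Icc (0 : ℝ) Tf,
        |gInc N X s t w| ≤ C * |t - s| ^ (γ * (w.length : ℝ))

/-- the projection of `T(ℬ)` onto `T(ℬ_n)` (kill words with a letter of size `> n`) -/
def projW {A : Type} (TD : TreeData A) (n : ℕ) (x : List TD.T → ℝ) : List TD.T → ℝ :=
  fun w => if ∀ σ ∈ w, TD.size σ ≤ n then x w else 0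

/-- the weight of a word of trees -/
def wt {A : Type} (TD : TreeData A) (w : List TD.T) : ℕ := (w.map TD.size).sum

/-- the commutator bracket with respect to truncated concatenation -/
def bracketW (N : ℕ) (x y : List ι → ℝ) : List ι → ℝ :=
  concatConvN N x y - concatConvN N y x

/-- the free (step-`N`) Lie algebra generated by the letters satisfying `P` -/
def freeLie (N : ℕ) (P : ι → Prop) : Submodule ℝ (List ι → ℝ) :=
  sInf {S : Submodule ℝ (List ι → ℝ) |
    (∀ a : ι, P a → deltaW [a] ∈ S) ∧ ∀ x ∈ S, ∀ y ∈ S, bracketW N x y ∈ S}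

/-- the Lie ideal of the free Lie algebra generated by a set `G` -/
def lieIdealGen (N : ℕ) (P : ι → Prop) (G : Set (List ι → ℝ)) : Submodule ℝ (List ι → ℝ) :=
  sInf {S : Submodule ℝ (List ι → ℝ) |
    G ⊆ ↑S ∧ ∀ x ∈ freeLie N P, ∀ y ∈ S, bracketW N x y ∈ S}

/-- the homogeneous norm `ρ(x) = Σ_k ‖ℓ_k‖^{1/k}` where `log x = Σ ℓ_k` is graded by
the number of tensor factors and `‖·‖` is the Euclidean norm -/
def rhoNorm (N : ℕ) (x : List ι → ℝ) : ℝ :=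
  ∑ k ∈ Finset.Icc 1 N,
    Real.sqrt (∑' w : {w : List ι // w.length = k}, logW N x w.1 ^ 2) ^ ((k : ℝ)⁻¹)

end Words

namespace TreeData

variable {A : Type} (TD : TreeData A)

/-- `φ` is the Hopf algebra morphism `φ_g : ℋ → T(ℝᵈ)` determined by `φ_g(1) = 1`,
`φ_g([h]_a) = φ_g(h) ⊗ e_a` and `φ_g(h₁h₂) = φ_g(h₁) ⧢ φ_g(h₂)`. -/
def IsPhiG (φ : TD.H →ₗ[ℝ] (List A → ℝ)) : Prop :=
  φ (1 : TD.H) = Words.unitW ∧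
  (∀ p : TD.H, (Function.support (φ p)).Finite) ∧
  (∀ (a : A) (p : TD.H),
      φ (TD.Bplus a p) = fun w => if w.getLast? = some a then φ p w.dropLast else 0) ∧
  (∀ p q : TD.H, φ (p * q) = Words.shufW (φ p) (φ q))

/-- the coefficient `⟨h, φ(𝐙)_s⟩` of the composition of a smooth function with a
controlled rough path, for a nonempty forest `h`:
`Σ_{h₁⋯hₙ = h} (1/n!) Dⁿφ(Z_s) : (⟨h₁,𝐙_s⟩, …, ⟨hₙ,𝐙_s⟩)`. -/
def compC {e : ℕ} (φ : (Fin e → ℝ) → Fin e → ℝ) (Zs : Fin e → TD.H)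
    (h : TD.T →₀ ℕ) (α : Fin e) : ℝ :=
  ∑' p : Σ n : ℕ, Fin n → (TD.T →₀ ℕ),
    if (∀ j, p.2 j ≠ 0) ∧ (∑ j, p.2 j) = h ∧ 0 < p.1 then
      (Nat.factorial p.1 : ℝ)⁻¹ *
        iteratedFDeriv ℝ p.1 (fun x => φ x α) (fun β => MvPolynomial.coeff 0 (Zs β))
          (fun j β => MvPolynomial.coeff (p.2 j) (Zs β))
    else 0

/-- the full composition coefficient, `⟨1, φ(𝐙)_s⟩ = φ(Z_s)` on the empty forest -/
def compFull {e : ℕ} (φ : (Fin e → ℝ) → Fin e → ℝ) (Zs : Fin e → TD.H)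
    (h : TD.T →₀ ℕ) (α : Fin e) : ℝ :=
  if h = 0 then φ (fun β => MvPolynomial.coeff 0 (Zs β)) α else TD.compC φ Zs h α

end TreeData

namespace CKCoproduct

variable {A : Type} {TD : TreeData A} (CK : CKCoproduct TD)

/-- `ψ : (ℋ,·,Δ) → (T(ℬ),⧢,Δ̄)` is a graded morphism of Hopf algebras such that for
every tree `τ` with `|τ| ≤ n`, `ψ(τ) = τ + ψ_{n−1}(τ)` (where `ψ_{n−1}` is `ψ`
composed with the projection onto `T(ℬ_{n−1})`). -/
def IsPsi (ψ : TD.H →ₗ[ℝ] (List TD.T → ℝ)) : Prop :=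
  ψ (1 : TD.H) = Words.unitW ∧
  (∀ p : TD.H, (Function.support (ψ p)).Finite) ∧
  (∀ (m : TD.T →₀ ℕ) (w : List TD.T), Words.wt TD w ≠ TD.grade m → ψ (TD.mono m) w = 0) ∧
  (∀ p q : TD.H, ψ (p * q) = Words.shufW (ψ p) (ψ q)) ∧
  (∀ (p : TD.H) (u v : List TD.T),
      ψ p (u ++ v) =
        LinearMap.mul' ℝ ℝ
          (TensorProduct.map
            ((LinearMap.proj (R := ℝ) (φ := fun _ : List TD.T => ℝ) u).comp ψ)
            ((LinearMap.proj (R := ℝ) (φ := fun _ : List TD.T => ℝ) v).comp ψ)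
            (CK.Δ p))) ∧
  (∀ (n : ℕ) (τ : TD.T), TD.size τ ≤ n →
      ∀ w : List TD.T, (∃ σ ∈ w, n ≤ TD.size σ) →
        ψ (TD.mono (Finsupp.single τ 1)) w = if w = [τ] then 1 else 0)

/-- an `𝐗`-controlled rough path with coefficients indexed by forests of grade `≤ M`:
`|⟨h,𝐙_t⟩ − ⟨𝐗_{st} ⋆ h, 𝐙_s⟩| ≤ C |t−s|^{(N−|h|)γ}`. -/
def IsControlled (γ : ℝ) (N M : ℕ) (Tf : ℝ) {e : ℕ}
    (Xinc : ℝ → ℝ → TD.Dual) (Z : ℝ → Fin e → TD.H) : Prop :=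
  (∀ t ∈ Set.Icc (0 : ℝ) Tf, ∀ α, ∀ m : TD.T →₀ ℕ, ¬TD.grade m ≤ M →
      MvPolynomial.coeff m (Z t α) = 0) ∧
    ∀ m : TD.T →₀ ℕ, TD.grade m ≤ M →
      ∃ C : ℝ, ∀ s ∈ Set.Icc (0 : ℝ) Tf, ∀ t ∈ Set.Icc (0 : ℝ) Tf, ∀ α,
        |MvPolynomial.coeff m (Z t α) -
            TD.pairL (CK.conv (Xinc s t) (TD.dualForest m)) (Z s α)| ≤
          C * |t - s| ^ (γ * ((N : ℝ) - (TD.grade m : ℝ)))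

/-- `Y` (together with the controlled rough path `𝐘 = Z` above it) solves the RDE
`dY_t = Σ_a f_a(Y_t) dX^a_t` driven by the rough path with increments `Xinc`, in the
sense of the controlled-rough-path fixed point `𝐘_t − 𝐘_s = ∫_s^t f(𝐘_r)·dX_r`,
the rough integral being defined via the sewing lemma from the local approximations
`Σ_{a} Σ_{h} ⟨h, f_a(𝐘)_s⟩ ⟨𝐗_{st}, [h]_a⟩`. -/
def IsRDESolution (γ : ℝ) (N M : ℕ) (Tf : ℝ) {e : ℕ}
    (Xinc : ℝ → ℝ → TD.Dual) (f : A → (Fin e → ℝ) → Fin e → ℝ)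
    (Y : ℝ → Fin e → ℝ) (Z : ℝ → Fin e → TD.H) : Prop :=
  CK.IsControlled γ N M Tf Xinc Z ∧
  (∀ t ∈ Set.Icc (0 : ℝ) Tf, ∀ α, MvPolynomial.coeff 0 (Z t α) = Y t α) ∧
  (∀ t ∈ Set.Icc (0 : ℝ) Tf, ∀ α, ∀ (h : TD.T →₀ ℕ) (a : A),
      TD.grade (Finsupp.single (TD.attach h a) 1) ≤ M →
      MvPolynomial.coeff (Finsupp.single (TD.attach h a) 1) (Z t α) =
        TD.compFull (f a) (Z t) h α) ∧
  (∀ t ∈ Set.Icc (0 : ℝ) Tf, ∀ α, ∀ m : TD.T →₀ ℕ, m ≠ 0 →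
      (¬∃ τ : TD.T, m = Finsupp.single τ 1) → MvPolynomial.coeff m (Z t α) = 0) ∧
  ∃ r : ℝ → ℝ → Fin e → ℝ,
    (∀ s ∈ Set.Icc (0 : ℝ) Tf, ∀ t ∈ Set.Icc (0 : ℝ) Tf, ∀ α,
      Y t α - Y s α =
        (∑' p : (TD.T →₀ ℕ) × A,
          if TD.grade p.1 ≤ N - 1 then
            TD.compFull (f p.2) (Z s) p.1 α *
              Xinc s t (Finsupp.single (TD.attach p.1 p.2) 1)
          else 0) + r s t α) ∧
    ∀ ε > (0 : ℝ), ∃ δ > (0 : ℝ), ∀ s ∈ Set.Icc (0 : ℝ) Tf, ∀ t ∈ Set.Icc (0 : ℝ) Tf,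
      |t - s| ≤ δ → ∀ α, |r s t α| ≤ ε * |t - s|

/-- the homogeneous norm `∥g∥ = Σ_{τ ∈ 𝒯_N} |⟨log⋆ g, τ⟩|^{1/|τ|}` on `G_N(ℋ)` -/
def hNorm (N : ℕ) (g : TD.Dual) : ℝ :=
  ∑' τ : TD.T,
    if TD.size τ ≤ N then |CK.logStar N g (Finsupp.single τ 1)| ^ ((TD.size τ : ℝ)⁻¹) else 0

end CKCoproduct

/-!
`ψ` is the map of Hairer and Kelly: the coefficient of the word `σ₁ ⋯ σₖ` in `ψ(h)` is
`(π_{σ₁} ⊗ ⋯ ⊗ π_{σₖ} ⊗ ε) Δ^{(k)} h`, where `π_σ` reads off the coefficient of the tree `σ`;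
equivalently, it is the iterated convolution `π_{σ₁} ⋆ (π_{σ₂} ⋆ ⋯ (π_{σₖ} ⋆ ε))` evaluated at `h`.

Since `Δ` is multiplicative and each `π_σ` is an infinitesimal character,
`π_σ(xy) = ε(x) π_σ(y) + π_σ(x) ε(y)`, `ψ` turns products into shuffles. Associativity of `⋆`
and the counit laws make `ψ` intertwine `Δ` with deconcatenation; they come from coassociativity
and counitality of `Δ`, which are not part of the data but follow from the cocycle identity
`Δ ∘ B₊ = B₊ ⊗ 1 + (id ⊗ B₊) ∘ Δ`, because an algebra map out of `ℋ` is determined by how it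
intertwines the `B₊`. `Δ` preserves the grading, hence so does `ψ`; this bounds the length of the
words in `ψ(h)`, and their letters are among the finitely many trees occurring in iterated
coproducts of `h`. Finally `⟨ψ(τ), σ⟩ = π_σ(τ)`, and a word of weight `|τ|` containing a letter
of size at least `|τ|` is that letter alone.
-/

lemma mul'_map_mul_of_derivation {B κ : Type*} [CommRing B] [Algebra ℝ B] {ε : B →ₐ[ℝ] ℝ}
    {D ℓ : B →ₗ[ℝ] ℝ}
    (hD : ∀ x y, D (x * y) = ε x * D y + D x * ε y) {s : Finset κ} {L R : κ → B →ₗ[ℝ] ℝ}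
    (hℓ : ∀ y y', ℓ (y * y') = ∑ i ∈ s, L i y * R i y') (t t' : B ⊗[ℝ] B) :
    LinearMap.mul' ℝ ℝ (TensorProduct.map D ℓ (t * t')) =
      ∑ i ∈ s, (LinearMap.mul' ℝ ℝ (TensorProduct.map ε.toLinearMap (L i) t) *
          LinearMap.mul' ℝ ℝ (TensorProduct.map D (R i) t') +
        LinearMap.mul' ℝ ℝ (TensorProduct.map D (L i) t) *
          LinearMap.mul' ℝ ℝ (TensorProduct.map ε.toLinearMap (R i) t')) := by
  induction t using TensorProduct.induction_on with
  | zero => simp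
  | add u v hu hv =>
    simp only [add_mul, map_add, hu, hv, ← Finset.sum_add_distrib]
    exact Finset.sum_congr rfl fun _ _ => by ring
  | tmul x y =>
    induction t' using TensorProduct.induction_on with
    | zero => simp
    | add u v hu hv =>
      simp only [mul_add, map_add, hu, hv, ← Finset.sum_add_distrib]
      exact Finset.sum_congr rfl fun _ _ => by ring
    | tmul x' y' =>
      simp only [Algebra.TensorProduct.tmul_mul_tmul, TensorProduct.map_tmul,
        LinearMap.mul'_apply, AlgHom.toLinearMap_apply, hD, hℓ, Finset.mul_sum]
      exact Finset.sum_congr rfl fun _ _ => by ring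

lemma Finset.sum_powerset_map {α β M : Type*} [AddCommMonoid M] (f : α ↪ β) (s : Finset α)
    (F : Finset β → M) : ∑ S ∈ (s.map f).powerset, F S = ∑ T ∈ s.powerset, F (T.map f) := by
  classical
  have h : (s.map f).powerset = s.powerset.image (Finset.map f) := by
    ext S
    simp [Finset.subset_map_iff, eq_comm]
  rw [h, Finset.sum_image fun _ _ _ _ hT => Finset.map_injective f hT]

lemma Fin.sum_finset_succ {M : Type*} [AddCommMonoid M] {n : ℕ} (F : Finset (Fin (n + 1)) → M) :
    ∑ S, F S = ∑ T : Finset (Fin n),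
      (F (T.map (Fin.succEmb n)) + F (insert 0 (T.map (Fin.succEmb n)))) := by
  rw [← Finset.powerset_univ, Fin.univ_succ, Finset.cons_eq_insert,
    Finset.sum_powerset_insert (by simp), Finset.sum_powerset_map, Finset.sum_powerset_map,
    Finset.powerset_univ, ← Finset.sum_add_distrib]
  rfl

lemma Fin.compl_map_succEmb {n : ℕ} (T : Finset (Fin n)) :
    (T.map (Fin.succEmb n))ᶜ = insert 0 (Tᶜ.map (Fin.succEmb n)) := by
  ext i
  cases i using Fin.cases <;> simp

namespace Words

section Subwords

variable {ι : Type}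

lemma subIdx_cons_map_succEmb (σ : ι) (v : List ι) (T : Finset (Fin v.length)) :
    subIdx (σ :: v) (T.map (Fin.succEmb v.length)) = subIdx v T := by
  rw [subIdx, ← (Fin.strictMono_succ.strictMonoOn _).map_finsetSort, List.map_map]
  rfl

lemma subIdx_cons_insert_zero (σ : ι) (v : List ι) (T : Finset (Fin v.length)) :
    subIdx (σ :: v) (insert 0 (T.map (Fin.succEmb v.length))) = σ :: subIdx v T := by
  rw [subIdx, Finset.sort_insert (h₁ := fun b _ => Fin.zero_le b) (h₂ := by simp), List.map_cons,
    ← subIdx, subIdx_cons_map_succEmb]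
  rfl

lemma sum_subIdx_cons {M : Type*} [AddCommMonoid M] (F : List ι → List ι → M) (σ : ι)
    (v : List ι) :
    ∑ S : Finset (Fin (σ :: v).length), F (subIdx (σ :: v) S) (subIdx (σ :: v) Sᶜ) =
      ∑ T : Finset (Fin v.length),
        (F (subIdx v T) (σ :: subIdx v Tᶜ) + F (σ :: subIdx v T) (subIdx v Tᶜ)) := by
  refine (Fin.sum_finset_succ (n := v.length)
    fun S => F (subIdx (σ :: v) S) (subIdx (σ :: v) Sᶜ)).trans ?_
  refine Finset.sum_congr rfl fun T _ => ?_
  have hc : (insert 0 (T.map (Fin.succEmb v.length)))ᶜ = Tᶜ.map (Fin.succEmb v.length) := by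
    rw [← compl_compl (Tᶜ.map _), Fin.compl_map_succEmb, compl_compl]
  rw [Fin.compl_map_succEmb, hc, subIdx_cons_map_succEmb, subIdx_cons_map_succEmb,
    subIdx_cons_insert_zero, subIdx_cons_insert_zero]

end Subwords

section Weight

variable {A : Type} {TD : TreeData A}

lemma wt_cons (σ : TD.T) (w : List TD.T) : wt TD (σ :: w) = TD.size σ + wt TD w := rfl

lemma wt_append (u v : List TD.T) : wt TD (u ++ v) = wt TD u + wt TD v := by
  simp [wt]

lemma length_le_wt (w : List TD.T) : w.length ≤ wt TD w := by
  induction w with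
  | nil => exact le_rfl
  | cons σ w ih => have := TD.size_pos σ; rw [wt_cons, List.length_cons]; omega

lemma eq_singleton_of_wt_le {w : List TD.T} {σ : TD.T} (hσ : σ ∈ w) (h : wt TD w ≤ TD.size σ) :
    w = [σ] := by
  obtain ⟨u, v, rfl⟩ := List.append_of_mem hσ
  rw [wt_append, wt_cons] at h
  have hu := length_le_wt u
  have hv := length_le_wt v
  rw [List.eq_nil_of_length_eq_zero (by omega : u.length = 0),
    List.eq_nil_of_length_eq_zero (by omega : v.length = 0)]
  rfl

end Weight

end Words

namespace TreeData

open MvPolynomial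

variable {A : Type} {TD : TreeData A}

lemma size_attach_eq (m : TD.T →₀ ℕ) (a : A) : TD.size (TD.attach m a) = 1 + TD.grade m :=
  TD.size_attach m a

lemma grade_add (m₁ m₂ : TD.T →₀ ℕ) : TD.grade (m₁ + m₂) = TD.grade m₁ + TD.grade m₂ :=
  Finsupp.sum_add_index' (by simp) (by intros; ring)

@[simp] lemma grade_zero : TD.grade 0 = 0 := Finsupp.sum_zero_index

lemma grade_single (τ : TD.T) (k : ℕ) : TD.grade (Finsupp.single τ k) = k * TD.size τ :=
  Finsupp.sum_single_index (by simp)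

lemma size_le_grade {m : TD.T →₀ ℕ} {σ : TD.T} (hσ : σ ∈ m.support) :
    TD.size σ ≤ TD.grade m :=
  (Nat.le_mul_of_pos_left _ (Nat.pos_of_ne_zero (Finsupp.mem_support_iff.mp hσ))).trans
    (Finset.single_le_sum (f := fun σ => m σ * TD.size σ) (fun _ _ => Nat.zero_le _) hσ)

lemma exists_attach_eq (τ : TD.T) : ∃ m a, TD.attach m a = τ :=
  let ⟨⟨m, a⟩, h⟩ := TD.attach_bijective.surjective τ
  ⟨m, a, h⟩

@[elab_as_elim]
lemma induction_attach {P : TD.T → Prop}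
    (attach : ∀ m a, (∀ σ ∈ m.support, P σ) → P (TD.attach m a)) (τ : TD.T) : P τ := by
  induction hn : TD.size τ using Nat.strong_induction_on generalizing τ with
  | _ n ih =>
    obtain ⟨m, a, rfl⟩ := exists_attach_eq τ
    refine attach m a fun σ hσ => ih _ ?_ σ rfl
    have := size_le_grade hσ
    rw [← hn, size_attach_eq]
    omega

lemma mono_eq_prod (m : TD.T →₀ ℕ) : TD.mono m = m.prod fun σ k => (X σ : TD.H) ^ k := by
  rw [mono, monomial_eq, C_1, one_mul]

lemma mono_add (m₁ m₂ : TD.T →₀ ℕ) : TD.mono (m₁ + m₂) = TD.mono m₁ * TD.mono m₂ := by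
  simp [mono, monomial_mul]

lemma mono_single (τ : TD.T) : TD.mono (Finsupp.single τ 1) = X τ := rfl

lemma mono_zero : TD.mono 0 = 1 := by simp [mono, monomial_zero']

lemma Bplus_mono (a : A) (m : TD.T →₀ ℕ) : TD.Bplus a (TD.mono m) = X (TD.attach m a) := by
  rw [Bplus, show TD.mono m = basisMonomials TD.T ℝ m by simp [mono], Module.Basis.constr_basis]
  rfl

lemma algHom_ext_of_Bplus {S : Type*} [CommSemiring S] [Algebra ℝ S] {F G : TD.H →ₐ[ℝ] S}
    (L : A → TD.H → S) (M : A → S → S)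
    (hF : ∀ a x, F (TD.Bplus a x) = L a x + M a (F x))
    (hG : ∀ a x, G (TD.Bplus a x) = L a x + M a (G x)) : F = G := by
  refine MvPolynomial.algHom_ext fun τ => ?_
  induction τ using induction_attach with
  | attach m a ih =>
    have hm : F (TD.mono m) = G (TD.mono m) := by
      simp only [mono_eq_prod, map_finsuppProd, map_pow]
      exact Finsupp.prod_congr fun σ hσ => by rw [ih σ hσ]
    rw [← Bplus_mono, hF, hG, hm]

def counit : TD.H →ₐ[ℝ] ℝ := aeval 0

lemma counit_apply (p : TD.H) : TD.counit p = coeff 0 p := by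
  simp [counit, constantCoeff_eq]

lemma counit_comp_Bplus (a : A) : TD.counit.toLinearMap ∘ₗ TD.Bplus a = 0 := by
  refine (basisMonomials TD.T ℝ).ext fun m => ?_
  rw [LinearMap.comp_apply, show basisMonomials TD.T ℝ m = TD.mono m by simp [mono],
    Bplus_mono]
  simp [counit]

def treeCoeff (σ : TD.T) : TD.H →ₗ[ℝ] ℝ := lcoeff ℝ (Finsupp.single σ 1)

lemma treeCoeff_mul (σ : TD.T) (x y : TD.H) :
    TD.treeCoeff σ (x * y) = TD.counit x * TD.treeCoeff σ y + TD.treeCoeff σ x * TD.counit y := by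
  simp [treeCoeff, counit_apply, coeff_mul, Finsupp.antidiagonal_single,
    Finset.Nat.antidiagonal_succ]

variable (TD) in
def tensorGraded (g : ℕ) : Submodule ℝ (TD.H ⊗[ℝ] TD.H) :=
  Submodule.span ℝ {x | ∃ m₁ m₂ : TD.T →₀ ℕ,
    TD.grade m₁ + TD.grade m₂ = g ∧ x = TD.mono m₁ ⊗ₜ[ℝ] TD.mono m₂}

lemma tmul_mem_tensorGraded {g : ℕ} (m₁ m₂ : TD.T →₀ ℕ) (h : TD.grade m₁ + TD.grade m₂ = g) :
    TD.mono m₁ ⊗ₜ[ℝ] TD.mono m₂ ∈ TD.tensorGraded g :=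
  Submodule.subset_span ⟨m₁, m₂, h, rfl⟩

instance : SetLike.GradedMonoid TD.tensorGraded where
  one_mem := by
    simpa [mono_zero, grade, Algebra.TensorProduct.one_def] using
      tmul_mem_tensorGraded (TD := TD) 0 0 rfl
  mul_mem i j x y hx hy := by
    have hxy := Submodule.mul_mem_mul hx hy
    rw [tensorGraded, tensorGraded, Submodule.span_mul_span] at hxy
    refine Submodule.span_mono ?_ hxy
    rintro _ ⟨_, ⟨m₁, m₂, hi, rfl⟩, _, ⟨m₁', m₂', hj, rfl⟩, rfl⟩
    refine ⟨m₁ + m₁', m₂ + m₂', ?_, ?_⟩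
    · rw [grade_add, grade_add]; omega
    · simp [mono_add]

lemma lTensor_Bplus_mem_tensorGraded (a : A) {g : ℕ} {x : TD.H ⊗[ℝ] TD.H}
    (hx : x ∈ TD.tensorGraded g) :
    LinearMap.lTensor TD.H (TD.Bplus a) x ∈ TD.tensorGraded (g + 1) := by
  refine Submodule.span_mono ?_ (Submodule.apply_mem_span_image_of_mem_span _ hx)
  rintro _ ⟨_, ⟨m₁, m₂, hg, rfl⟩, rfl⟩
  refine ⟨m₁, Finsupp.single (TD.attach m₂ a) 1, ?_, ?_⟩
  · rw [grade_single, one_mul, size_attach_eq]; omega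
  · simp [Bplus_mono]; rfl

lemma mul'_map_eq_zero_of_mem_tensorGraded {g : ℕ} {x : TD.H ⊗[ℝ] TD.H}
    (hx : x ∈ TD.tensorGraded g) (f h : TD.H →ₗ[ℝ] ℝ)
    (hfh : ∀ m₁ m₂, TD.grade m₁ + TD.grade m₂ = g → f (TD.mono m₁) * h (TD.mono m₂) = 0) :
    LinearMap.mul' ℝ ℝ (TensorProduct.map f h x) = 0 := by
  refine (Submodule.span_le (p := LinearMap.ker (LinearMap.mul' ℝ ℝ ∘ₗ TensorProduct.map f h))
    |>.mpr ?_) hx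
  rintro _ ⟨m₁, m₂, hg, rfl⟩
  simpa using hfh m₁ m₂ hg

end TreeData

namespace CKCoproduct

open MvPolynomial TreeData

variable {A : Type} {TD : TreeData A} (CK : CKCoproduct TD)

lemma comul_comp_Bplus (a : A) :
    CK.Δ.toLinearMap ∘ₗ TD.Bplus a =
      (TensorProduct.mk ℝ TD.H TD.H).flip 1 ∘ₗ TD.Bplus a +
        LinearMap.lTensor TD.H (TD.Bplus a) ∘ₗ CK.Δ.toLinearMap :=
  LinearMap.ext (CK.Δ_Bplus a)

lemma lid_rTensor_counit_comp_comul :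
    TensorProduct.lid ℝ TD.H ∘ₗ LinearMap.rTensor TD.H TD.counit.toLinearMap ∘ₗ
      CK.Δ.toLinearMap = LinearMap.id := by
  have h : ((Algebra.TensorProduct.lid ℝ TD.H).toAlgHom.comp
      ((Algebra.TensorProduct.map TD.counit (AlgHom.id ℝ TD.H)).comp CK.Δ)) =
      AlgHom.id ℝ TD.H := by
    refine algHom_ext_of_Bplus 0 (fun a => TD.Bplus a) (fun a x => ?_) fun a x => by simp
    have hB : (TensorProduct.lid ℝ TD.H ∘ₗ LinearMap.rTensor TD.H TD.counit.toLinearMap) ∘ₗ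
        LinearMap.lTensor TD.H (TD.Bplus a) =
        TD.Bplus a ∘ₗ TensorProduct.lid ℝ TD.H ∘ₗ LinearMap.rTensor TD.H TD.counit.toLinearMap :=
      TensorProduct.ext' fun x y => by simp
    have hε := LinearMap.congr_fun (counit_comp_Bplus (TD := TD) a) x
    simp only [LinearMap.comp_apply, AlgHom.toLinearMap_apply, LinearMap.zero_apply] at hε
    simp [CK.Δ_Bplus, hε]
    exact LinearMap.congr_fun hB (CK.Δ x)
  exact congrArg AlgHom.toLinearMap h

lemma rid_lTensor_counit_comp_comul :
    TensorProduct.rid ℝ TD.H ∘ₗ LinearMap.lTensor TD.H TD.counit.toLinearMap ∘ₗ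
      CK.Δ.toLinearMap = LinearMap.id := by
  have h : ((Algebra.TensorProduct.rid ℝ ℝ TD.H).toAlgHom.comp
      ((Algebra.TensorProduct.map (AlgHom.id ℝ TD.H) TD.counit).comp CK.Δ)) =
      AlgHom.id ℝ TD.H := by
    refine algHom_ext_of_Bplus (fun a => TD.Bplus a) 0 (fun a x => ?_) fun a x => by simp
    have h0 : LinearMap.lTensor TD.H TD.counit.toLinearMap ∘ₗ LinearMap.lTensor TD.H (TD.Bplus a)
        = 0 := by
      rw [← LinearMap.lTensor_comp, counit_comp_Bplus, LinearMap.lTensor_zero]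
    simp [CK.Δ_Bplus]
    exact LinearMap.congr_fun h0 (CK.Δ x)
  exact congrArg AlgHom.toLinearMap h

lemma coassoc :
    TensorProduct.assoc ℝ TD.H TD.H TD.H ∘ₗ LinearMap.rTensor TD.H CK.Δ.toLinearMap ∘ₗ
      CK.Δ.toLinearMap = LinearMap.lTensor TD.H CK.Δ.toLinearMap ∘ₗ CK.Δ.toLinearMap := by
  set j : TD.H →ₗ[ℝ] TD.H ⊗[ℝ] TD.H := (TensorProduct.mk ℝ TD.H TD.H).flip 1
  have h : ((Algebra.TensorProduct.assoc ℝ ℝ ℝ TD.H TD.H TD.H).toAlgHom.comp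
      ((Algebra.TensorProduct.map CK.Δ (AlgHom.id ℝ TD.H)).comp CK.Δ)) =
      (Algebra.TensorProduct.map (AlgHom.id ℝ TD.H) CK.Δ).comp CK.Δ := by
    refine algHom_ext_of_Bplus
      (fun a x => TD.Bplus a x ⊗ₜ (1 : TD.H ⊗[ℝ] TD.H) +
        LinearMap.lTensor TD.H (j ∘ₗ TD.Bplus a) (CK.Δ x))
      (fun a => LinearMap.lTensor TD.H (LinearMap.lTensor TD.H (TD.Bplus a)))
      (fun a x => ?_) fun a x => ?_
    · have h1 : ∀ t, TensorProduct.assoc ℝ TD.H TD.H TD.H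
          ((LinearMap.lTensor TD.H (TD.Bplus a) t) ⊗ₜ (1 : TD.H)) =
          LinearMap.lTensor TD.H (j ∘ₗ TD.Bplus a) t := fun t => by
        induction t using TensorProduct.induction_on with
        | zero => simp
        | tmul y z => simp [j]
        | add u v hu hv => simp only [map_add, TensorProduct.add_tmul, hu, hv]
      have h2 : ∀ s, TensorProduct.assoc ℝ TD.H TD.H TD.H
          (LinearMap.rTensor TD.H CK.Δ.toLinearMap (LinearMap.lTensor TD.H (TD.Bplus a) s)) =
          LinearMap.lTensor TD.H (LinearMap.lTensor TD.H (TD.Bplus a))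
            (TensorProduct.assoc ℝ TD.H TD.H TD.H (LinearMap.rTensor TD.H CK.Δ.toLinearMap s)) :=
          fun s => by
        rw [← LinearMap.comp_apply (LinearMap.rTensor _ _), LinearMap.rTensor_comp_lTensor,
          ← LinearMap.lTensor_comp_rTensor, LinearMap.comp_apply, LinearMap.lTensor_tensor]
        simp
      simp only [AlgHom.comp_apply, CK.Δ_Bplus, map_add, Algebra.TensorProduct.map_tmul,
        AlgHom.id_apply, TensorProduct.add_tmul, add_assoc]
      exact congrArg₂ (· + ·) rfl (congrArg₂ (· + ·) (h1 _) (h2 _))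
    · have h3 : LinearMap.lTensor TD.H CK.Δ.toLinearMap ∘ₗ LinearMap.lTensor TD.H (TD.Bplus a) =
          LinearMap.lTensor TD.H (j ∘ₗ TD.Bplus a) +
            LinearMap.lTensor TD.H (LinearMap.lTensor TD.H (TD.Bplus a)) ∘ₗ
              LinearMap.lTensor TD.H CK.Δ.toLinearMap := by
        rw [← LinearMap.lTensor_comp, comul_comp_Bplus, LinearMap.lTensor_add,
          ← LinearMap.lTensor_comp]
      simp only [AlgHom.comp_apply, CK.Δ_Bplus, map_add, Algebra.TensorProduct.map_tmul,
        AlgHom.id_apply, map_one, add_assoc]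
      exact congrArg₂ (· + ·) (by rw [Algebra.TensorProduct.one_def]) (LinearMap.congr_fun h3 _)
  exact congrArg AlgHom.toLinearMap h

def convolution (f g : TD.H →ₗ[ℝ] ℝ) : TD.H →ₗ[ℝ] ℝ :=
  LinearMap.mul' ℝ ℝ ∘ₗ TensorProduct.map f g ∘ₗ CK.Δ.toLinearMap

lemma convolution_apply (f g : TD.H →ₗ[ℝ] ℝ) (p : TD.H) :
    CK.convolution f g p = LinearMap.mul' ℝ ℝ (TensorProduct.map f g (CK.Δ p)) := rfl

lemma counit_convolution (g : TD.H →ₗ[ℝ] ℝ) :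
    CK.convolution TD.counit.toLinearMap g = g := by
  have h : LinearMap.mul' ℝ ℝ ∘ₗ TensorProduct.map TD.counit.toLinearMap g =
      g ∘ₗ TensorProduct.lid ℝ TD.H ∘ₗ LinearMap.rTensor TD.H TD.counit.toLinearMap :=
    TensorProduct.ext' fun x y => by simp
  refine LinearMap.ext fun p => ?_
  have hp := LinearMap.congr_fun (lid_rTensor_counit_comp_comul CK) p
  rw [LinearMap.id_apply] at hp
  conv_rhs => rw [← hp]
  exact LinearMap.congr_fun h (CK.Δ p)

lemma convolution_counit (f : TD.H →ₗ[ℝ] ℝ) :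
    CK.convolution f TD.counit.toLinearMap = f := by
  have h : LinearMap.mul' ℝ ℝ ∘ₗ TensorProduct.map f TD.counit.toLinearMap =
      f ∘ₗ TensorProduct.rid ℝ TD.H ∘ₗ LinearMap.lTensor TD.H TD.counit.toLinearMap :=
    TensorProduct.ext' fun x y => by simp [mul_comm]
  refine LinearMap.ext fun p => ?_
  have hp := LinearMap.congr_fun (rid_lTensor_counit_comp_comul CK) p
  rw [LinearMap.id_apply] at hp
  conv_rhs => rw [← hp]
  exact LinearMap.congr_fun h (CK.Δ p)

lemma convolution_assoc (f g h : TD.H →ₗ[ℝ] ℝ) :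
    CK.convolution (CK.convolution f g) h = CK.convolution f (CK.convolution g h) := by
  have hl : LinearMap.mul' ℝ ℝ ∘ₗ TensorProduct.map (CK.convolution f g) h =
      (LinearMap.mul' ℝ ℝ ∘ₗ TensorProduct.map (LinearMap.mul' ℝ ℝ ∘ₗ TensorProduct.map f g) h) ∘ₗ
        LinearMap.rTensor TD.H CK.Δ.toLinearMap :=
    TensorProduct.ext' fun x y => by simp [convolution]
  have hr : LinearMap.mul' ℝ ℝ ∘ₗ TensorProduct.map f (CK.convolution g h) =
      (LinearMap.mul' ℝ ℝ ∘ₗ TensorProduct.map f (LinearMap.mul' ℝ ℝ ∘ₗ TensorProduct.map g h)) ∘ₗ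
        LinearMap.lTensor TD.H CK.Δ.toLinearMap :=
    TensorProduct.ext' fun x y => by simp [convolution]
  have hassoc :
      LinearMap.mul' ℝ ℝ ∘ₗ TensorProduct.map (LinearMap.mul' ℝ ℝ ∘ₗ TensorProduct.map f g) h =
      (LinearMap.mul' ℝ ℝ ∘ₗ TensorProduct.map f (LinearMap.mul' ℝ ℝ ∘ₗ TensorProduct.map g h)) ∘ₗ
        (TensorProduct.assoc ℝ TD.H TD.H TD.H).toLinearMap :=
    TensorProduct.ext_threefold fun x y z => by simp [mul_assoc]
  refine LinearMap.ext fun p => ?_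
  have hc := LinearMap.congr_fun CK.coassoc p
  simp only [LinearMap.comp_apply, LinearEquiv.coe_coe, AlgHom.toLinearMap_apply] at hc
  rw [convolution_apply, ← LinearMap.comp_apply (LinearMap.mul' ℝ ℝ), hl, LinearMap.comp_apply,
    hassoc, LinearMap.comp_apply, LinearEquiv.coe_coe, hc,
    ← LinearMap.comp_apply _ (LinearMap.lTensor _ _), ← hr]
  rfl

lemma comul_mono_mem_tensorGraded_of_forall {m : TD.T →₀ ℕ}
    (h : ∀ σ ∈ m.support, CK.Δ (X σ) ∈ TD.tensorGraded (TD.size σ)) :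
    CK.Δ (TD.mono m) ∈ TD.tensorGraded (TD.grade m) := by
  rw [mono_eq_prod, map_finsuppProd]
  simp only [map_pow]
  exact SetLike.prod_pow_mem_graded _ _ _ _ h

lemma comul_X_mem_tensorGraded (τ : TD.T) : CK.Δ (X τ) ∈ TD.tensorGraded (TD.size τ) := by
  induction τ using induction_attach with
  | attach m a ih =>
    rw [← Bplus_mono, CK.Δ_Bplus]
    refine add_mem ?_ ?_
    · simpa [Bplus_mono, mono_single, mono_zero] using
        tmul_mem_tensorGraded (g := TD.size (TD.attach m a)) (Finsupp.single (TD.attach m a) 1) 0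
          (by simp [grade_single])
    · rw [size_attach_eq, add_comm]
      exact lTensor_Bplus_mem_tensorGraded a (CK.comul_mono_mem_tensorGraded_of_forall ih)

lemma comul_mono_mem_tensorGraded (m : TD.T →₀ ℕ) :
    CK.Δ (TD.mono m) ∈ TD.tensorGraded (TD.grade m) :=
  CK.comul_mono_mem_tensorGraded_of_forall fun σ _ => CK.comul_X_mem_tensorGraded σ

def psiCoeff : List TD.T → TD.H →ₗ[ℝ] ℝ
  | [] => TD.counit.toLinearMap
  | σ :: w => CK.convolution (TD.treeCoeff σ) (psiCoeff w)

def psi : TD.H →ₗ[ℝ] (List TD.T → ℝ) := LinearMap.pi CK.psiCoeff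

lemma psiCoeff_nil : CK.psiCoeff [] = TD.counit.toLinearMap := rfl

lemma psiCoeff_cons (σ : TD.T) (w : List TD.T) :
    CK.psiCoeff (σ :: w) = CK.convolution (TD.treeCoeff σ) (CK.psiCoeff w) := rfl

lemma psiCoeff_singleton (σ : TD.T) : CK.psiCoeff [σ] = TD.treeCoeff σ :=
  CK.convolution_counit _

lemma psiCoeff_append (u v : List TD.T) :
    CK.psiCoeff (u ++ v) = CK.convolution (CK.psiCoeff u) (CK.psiCoeff v) := by
  induction u with
  | nil => exact (CK.counit_convolution _).symm
  | cons σ u ih => rw [List.cons_append, psiCoeff_cons, ih, psiCoeff_cons, convolution_assoc]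

lemma psiCoeff_mono_eq_zero_of_wt_ne (w : List TD.T) {m : TD.T →₀ ℕ}
    (h : Words.wt TD w ≠ TD.grade m) :
    CK.psiCoeff w (TD.mono m) = 0 := by
  induction w generalizing m with
  | nil =>
    have hm : m ≠ 0 := by rintro rfl; exact h rfl
    simp [psiCoeff_nil, counit_apply, mono, coeff_monomial, hm]
  | cons σ v ih =>
    refine mul'_map_eq_zero_of_mem_tensorGraded (CK.comul_mono_mem_tensorGraded m) _ _
      fun m₁ m₂ hg => ?_
    by_cases h₁ : m₁ = Finsupp.single σ 1
    · subst h₁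
      rw [Words.wt_cons, ← hg, grade_single, one_mul] at h
      rw [ih (by omega), mul_zero]
    · simp [treeCoeff, mono, coeff_monomial, h₁]

lemma psiCoeff_mul (w : List TD.T) (p q : TD.H) :
    CK.psiCoeff w (p * q) = ∑ S : Finset (Fin w.length),
      CK.psiCoeff (Words.subIdx w S) p * CK.psiCoeff (Words.subIdx w Sᶜ) q := by
  induction w generalizing p q with
  | nil =>
    have h : ∀ S : Finset (Fin 0), Words.subIdx ([] : List TD.T) S = [] := fun S => by
      simp [Words.subIdx, Subsingleton.elim S ∅]
    simp [psiCoeff_nil, h]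
  | cons σ v ih =>
    rw [psiCoeff_cons, convolution_apply, map_mul,
      mul'_map_mul_of_derivation (treeCoeff_mul σ) ih,
      Words.sum_subIdx_cons (fun u u' => CK.psiCoeff u p * CK.psiCoeff u' q)]
    refine Finset.sum_congr rfl fun T _ => ?_
    simp only [← convolution_apply, counit_convolution, ← psiCoeff_cons]

lemma finite_setOf_length_eq_psiCoeff_ne_zero (k : ℕ) (p : TD.H) :
    {w : List TD.T | w.length = k ∧ CK.psiCoeff w p ≠ 0}.Finite := by
  induction k generalizing p with
  | zero => exact (Set.finite_singleton []).subset fun w hw => List.eq_nil_of_length_eq_zero hw.1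
  | succ k ih =>
    obtain ⟨S, hS⟩ := TensorProduct.exists_finset (CK.Δ p)
    have hσ : ∀ x : TD.H, {σ | TD.treeCoeff σ x ≠ 0}.Finite := fun x =>
      (x.support.finite_toSet.preimage (Finsupp.single_left_injective one_ne_zero).injOn).subset
        fun σ hσ => by simpa [treeCoeff, MvPolynomial.mem_support_iff] using hσ
    -- the first letter is a tree occurring in a left factor of one of the terms of `Δ p`
    refine (S.finite_toSet.biUnion fun i _ =>
      ((hσ i.1).prod (ih i.2)).image fun q => q.1 :: q.2).subset ?_
    rintro (_ | ⟨σ, v⟩) ⟨hlen, hne⟩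
    · simp at hlen
    · rw [psiCoeff_cons, convolution_apply, hS] at hne
      simp only [map_sum, TensorProduct.map_tmul, LinearMap.mul'_apply] at hne
      obtain ⟨i, hi, hne⟩ := Finset.exists_ne_zero_of_sum_ne_zero hne
      simp only [Set.mem_iUnion, Set.mem_image]
      exact ⟨i, hi, (σ, v),
        ⟨left_ne_zero_of_mul hne, by simpa using hlen, right_ne_zero_of_mul hne⟩, rfl⟩

lemma length_le_of_psiCoeff_ne_zero {w : List TD.T} {p : TD.H} (h : CK.psiCoeff w p ≠ 0) :
    w.length ≤ p.support.sup TD.grade := by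
  rw [p.as_sum, map_sum] at h
  obtain ⟨m, hm, hne⟩ := Finset.exists_ne_zero_of_sum_ne_zero h
  have hmono : monomial m (coeff m p) = coeff m p • TD.mono m := by
    rw [mono, smul_monomial, smul_eq_mul, mul_one]
  rw [hmono, map_smul] at hne
  have hwt : Words.wt TD w = TD.grade m :=
    not_not.mp fun hwt => hne (by rw [CK.psiCoeff_mono_eq_zero_of_wt_ne w hwt, smul_zero])
  exact (Words.length_le_wt w).trans (hwt ▸ Finset.le_sup hm)

lemma psi_apply (p : TD.H) (w : List TD.T) : CK.psi p w = CK.psiCoeff w p := rfl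

lemma proj_comp_psi (w : List TD.T) : LinearMap.proj w ∘ₗ CK.psi = CK.psiCoeff w :=
  LinearMap.proj_pi _ w

lemma psi_mul (p q : TD.H) : CK.psi (p * q) = Words.shufW (CK.psi p) (CK.psi q) :=
  funext fun w => CK.psiCoeff_mul w p q

lemma psi_apply_append (p : TD.H) (u v : List TD.T) :
    CK.psi p (u ++ v) = LinearMap.mul' ℝ ℝ
      (TensorProduct.map (LinearMap.proj u ∘ₗ CK.psi) (LinearMap.proj v ∘ₗ CK.psi) (CK.Δ p)) := by
  rw [CK.proj_comp_psi, CK.proj_comp_psi]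
  exact LinearMap.congr_fun (CK.psiCoeff_append u v) p

lemma psi_one : CK.psi 1 = Words.unitW := by
  funext w
  rw [psi_apply, ← mono_zero]
  cases w with
  | nil => simp [psiCoeff_nil, counit_apply, Words.unitW, mono]
  | cons σ v =>
    have := TD.size_pos σ
    rw [CK.psiCoeff_mono_eq_zero_of_wt_ne _ (by rw [Words.wt_cons, grade_zero]; omega)]
    simp [Words.unitW]

lemma finite_support_psi (p : TD.H) : (Function.support (CK.psi p)).Finite := by
  refine ((Finset.range (p.support.sup TD.grade + 1)).finite_toSet.biUnion
    fun k _ => CK.finite_setOf_length_eq_psiCoeff_ne_zero k p).subset fun w hw => ?_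
  simp only [Set.mem_iUnion]
  exact ⟨w.length, Finset.mem_range.mpr (Nat.lt_succ_of_le (CK.length_le_of_psiCoeff_ne_zero hw)),
    rfl, hw⟩

lemma psi_X_apply_of_mem {τ σ : TD.T} {w : List TD.T} (hσ : σ ∈ w) (hτσ : TD.size τ ≤ TD.size σ) :
    CK.psi (X τ) w = if w = [τ] then 1 else 0 := by
  by_cases hwt : Words.wt TD w = TD.size τ
  · obtain rfl := Words.eq_singleton_of_wt_le hσ (hwt ▸ hτσ)
    simp [psi_apply, psiCoeff_singleton, treeCoeff, coeff_X, Finsupp.single_left_inj, eq_comm]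
  · rw [psi_apply, ← mono_single,
      CK.psiCoeff_mono_eq_zero_of_wt_ne w (by rwa [grade_single, one_mul]), if_neg (by rintro rfl; exact hwt rfl)]

end CKCoproduct

theorem stmt_10_general {d : ℕ} (TD : TreeData (Fin d)) (CK : CKCoproduct TD) :
    ∃ ψ : TD.H →ₗ[ℝ] (List TD.T → ℝ), CK.IsPsi ψ :=
  ⟨CK.psi, CK.psi_one, CK.finite_support_psi,
    fun _ w h => CK.psiCoeff_mono_eq_zero_of_wt_ne w h, CK.psi_mul, CK.psi_apply_append,
    fun _ _ hτ _ ⟨_, hσ, hσn⟩ => CK.psi_X_apply_of_mem hσ (hτ.trans hσn)⟩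

theorem stmt_10 {d : ℕ} (hd : 1 ≤ d) (TD : TreeData (Fin d)) (CK : CKCoproduct TD) :
    ∃ ψ : TD.H →ₗ[ℝ] (List TD.T → ℝ), CK.IsPsi ψ :=
  stmt_10_general TD CK
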